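/- The partial-sum sequence ϑ_m = Σ_{s=0}^{m} θ_s is strictly positive and strictly decreasing: ϑ_0 > ϑ_1 > ⋯ > ϑ_m > ⋯ > 0. -/

import Mathlib

/-!
Summing the recurrence for `θ` shows that `ϑ` satisfies the three-term recurrence
`(1 + α)(k + 2) ϑ_{k+2} = (2k + 2 + 2α²) ϑ_{k+1} - (1 - α) k ϑ_k`, with `(1 + α) ϑ_1 = 2α² ϑ_0`.
Rearranged, it expresses both `ϑ_{k+1} - ϑ_{k+2}` and `(k + 2) ϑ_{k+2} - (k + 1 + α) ϑ_{k+1}`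
as nonnegative combinations of `ϑ_{k+1}` and of the same two quantities one step earlier, so by
induction `ϑ` stays positive and decreasing, the second quantity keeping `ϑ_{k+2}` from
dropping below `(k + 1 + α) / (k + 2)` times `ϑ_{k+1}`.
-/

/-- The sequence `θ_m`. -/
noncomputable def seqTheta (α : ℝ) : ℕ → ℝ
  | 0 => ((α + 1) / (2 * α)) ^ α
  | 1 => (α - 1) * (2 * α + 1) / (α + 1) * seqTheta α 0
  | (m + 2) =>
      2 * α / (((m : ℝ) + 2) * (1 + α)) *
        (((((m : ℝ) + 2) - 1) / α - (1 - α) / (2 * α) * (2 * α + 1)) * seqTheta α (m + 1) +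
          (1 - α) / (2 * α) * (3 - ((m : ℝ) + 2)) * seqTheta α m)

/-- The partial sums `ϑ_m = Σ_{s=0}^m θ_s`. -/
noncomputable def varTheta (α : ℝ) (m : ℕ) : ℝ := ∑ s ∈ Finset.range (m + 1), seqTheta α s

def PartialSumRecurrence (α : ℝ) (V : ℕ → ℝ) : Prop :=
  ∀ k : ℕ, (1 + α) * (k + 2) * V (k + 2) = (2 * k + 2 + 2 * α ^ 2) * V (k + 1) - (1 - α) * k * V k

namespace PartialSumRecurrence

variable {α : ℝ} {V : ℕ → ℝ}

theorem sub_eq (hV : PartialSumRecurrence α V) (k : ℕ) :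
    (1 + α) * (k + 2) * (V (k + 1) - V (k + 2)) =
      2 * α * (1 - α) * V (k + 1) + (1 - α) * (k * (V k - V (k + 1))) := by
  linear_combination -hV k

theorem ratio_sub_eq (hV : PartialSumRecurrence α V) (k : ℕ) :
    (1 + α) * (k + α) * ((k + 2) * V (k + 2) - (k + 1 + α) * V (k + 1)) =
      α * (1 - α) ^ 2 * V (k + 1) + (1 - α) * (k * ((k + 1) * V (k + 1) - (k + α) * V k)) := by
  linear_combination (k + α) * hV k

/-- The hypotheses carry the factor `k` so that at `k = 0` nothing is required of `V 0`. -/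
theorem lt_and_ratio_lt (hV : PartialSumRecurrence α V) (hα : α ∈ Set.Ioo 0 1) (k : ℕ)
    (hpos : 0 < V (k + 1)) (hlt : 0 ≤ k * (V k - V (k + 1)))
    (hratio : 0 ≤ k * ((k + 1) * V (k + 1) - (k + α) * V k)) :
    V (k + 2) < V (k + 1) ∧ (k + 1 + α) * V (k + 1) < (k + 2) * V (k + 2) := by
  have hα₀ := hα.1
  have hα₁ : 0 < 1 - α := sub_pos.2 hα.2
  constructor
  · have h : 0 < (1 + α) * (k + 2) * (V (k + 1) - V (k + 2)) := by
      rw [hV.sub_eq]; positivity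
    exact sub_pos.1 (pos_of_mul_pos_right h (by positivity))
  · have h : 0 < (1 + α) * (k + α) * ((k + 2) * V (k + 2) - (k + 1 + α) * V (k + 1)) := by
      rw [hV.ratio_sub_eq]; positivity
    exact sub_pos.1 (pos_of_mul_pos_right h (by positivity))

theorem pos_and_lt_and_ratio_lt (hV : PartialSumRecurrence α V) (hα : α ∈ Set.Ioo 0 1) (hV₁ : 0 < V 1)
    (k : ℕ) :
    0 < V (k + 1) ∧ V (k + 2) < V (k + 1) ∧ (k + 1 + α) * V (k + 1) < (k + 2) * V (k + 2) := by
  have hα₀ := hα.1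
  induction k with
  | zero => simpa [hV₁] using hV.lt_and_ratio_lt hα 0 hV₁
  | succ k ih =>
    obtain ⟨hpos, hlt, hratio⟩ := ih
    have hpos' : 0 < V (k + 2) := by
      have : 0 < (k + 1 + α) * V (k + 1) := by positivity
      exact pos_of_mul_pos_right (this.trans hratio) (by positivity)
    refine ⟨hpos', ?_⟩
    have h := hV.lt_and_ratio_lt hα (k + 1) hpos'
      (mul_nonneg (by positivity) (sub_nonneg.2 hlt.le))
      (mul_nonneg (by positivity) (by push_cast; linarith))
    push_cast at h ⊢
    exact h

end PartialSumRecurrence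

theorem seqTheta_zero_pos {α : ℝ} (hα : 0 < α) : 0 < seqTheta α 0 :=
  Real.rpow_pos_of_pos (by positivity) α

theorem one_add_mul_seqTheta_one {α : ℝ} (hα : 1 + α ≠ 0) :
    (1 + α) * seqTheta α 1 = -((1 - α) * (2 * α + 1)) * seqTheta α 0 := by
  rw [seqTheta.eq_2, add_comm α 1]
  field_simp
  ring

theorem seqTheta_recurrence {α : ℝ} (hα₀ : α ≠ 0) (hα : 1 + α ≠ 0) (k : ℕ) :
    (1 + α) * (k + 2) * seqTheta α (k + 2) =
      (2 * k + 2 - (1 - α) * (2 * α + 1)) * seqTheta α (k + 1) +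
        (1 - α) * (1 - k) * seqTheta α k := by
  rw [seqTheta.eq_3]
  field_simp
  ring

theorem varTheta_succ (α : ℝ) (m : ℕ) :
    varTheta α (m + 1) = varTheta α m + seqTheta α (m + 1) :=
  Finset.sum_range_succ _ _

theorem varTheta_zero (α : ℝ) : varTheta α 0 = seqTheta α 0 :=
  Finset.sum_range_one _

theorem one_add_mul_varTheta_one {α : ℝ} (hα : 1 + α ≠ 0) :
    (1 + α) * varTheta α 1 = 2 * α ^ 2 * varTheta α 0 := by
  rw [varTheta_succ, varTheta_zero]
  linear_combination one_add_mul_seqTheta_one hα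

theorem partialSumRecurrence_varTheta {α : ℝ} (hα₀ : α ≠ 0) (hα : 1 + α ≠ 0) :
    PartialSumRecurrence α (varTheta α) := by
  intro k
  induction k with
  | zero =>
    have h := seqTheta_recurrence hα₀ hα 0
    rw [varTheta_succ, varTheta_succ, varTheta_zero]
    push_cast at h ⊢
    linear_combination h + one_add_mul_seqTheta_one hα
  | succ k ih =>
    have h := seqTheta_recurrence hα₀ hα (k + 1)
    rw [varTheta_succ α (k + 2), varTheta_succ α (k + 1), varTheta_succ α k]
    rw [varTheta_succ α (k + 1), varTheta_succ α k] at ih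
    push_cast at h ih ⊢
    linear_combination h + ih

theorem varTheta_pos_strict_anti (α : ℝ) (hα : α ∈ Set.Ioo (0 : ℝ) 1) :
    (∀ m : ℕ, 0 < varTheta α m) ∧ (∀ m : ℕ, varTheta α (m + 1) < varTheta α m) := by
  have hα₀ := hα.1
  have hα' : 0 < 1 + α := by positivity
  have hV₀ : 0 < varTheta α 0 := varTheta_zero α ▸ seqTheta_zero_pos hα₀
  have hV₁ := one_add_mul_varTheta_one hα'.ne'
  have hV₁_pos : 0 < varTheta α 1 :=
    pos_of_mul_pos_right (hV₁ ▸ by positivity) hα'.le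
  have hV₁_lt : varTheta α 1 < varTheta α 0 := by
    have : 2 * α ^ 2 < 1 + α := by nlinarith [hα.2]
    refine lt_of_mul_lt_mul_left ?_ hα'.le
    rw [hV₁]
    exact mul_lt_mul_of_pos_right this hV₀
  have h := (partialSumRecurrence_varTheta hα₀.ne' hα'.ne').pos_and_lt_and_ratio_lt hα hV₁_pos
  refine ⟨fun m => ?_, fun m => ?_⟩ <;> rcases m with _ | m
  exacts [hV₀, (h m).1, hV₁_lt, (h m).2.1]
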